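/- arXiv:2209.10202 — 3 statements merged into one kernel-verified Lean document; each statement's English description precedes it below -/
import Mathlib

section
/- Let H be a real Hilbert space, Q ⊆ H a nonempty closed convex set, ν > 0, A : Q → H a ν-inverse strongly monotone operator, S : Q → Q a nonexpansive mapping, f : Q → Q a contraction with coefficient ρ ∈ [0,1), 0 < a < b < 2ν, and λ : (0,1] → [a,b]. Assume Ω = Fix(S) ∩ S_VI(A,Q) is nonempty, and for each t ∈ (0,1] let x_t ∈ Q be the unique point with x_t = t·f(x_t) + (1 − t)·S(P_Q(x_t − λ(t)·A x_t)), and set z_t = P_Q(x_t − λ(t)·A x_t). Then ‖x_t − z_t‖ → 0 as t → 0⁺. -/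
open scoped RealInnerProductSpace

/-!
Fix `p ∈ Ω`. Since `p` solves the variational inequality, `p = P_Q (p - λ A p)`, and firm
nonexpansiveness of `P_Q` together with the inverse strong monotonicity of `A` gives
`‖z_t - p‖² + ‖(x_t - z_t) - λ(t) (A x_t - A p)‖² + a (2ν - b) ‖A x_t - A p‖² ≤ ‖x_t - p‖²`.
As `x_t` is a convex combination of `f x_t` and `S z_t`, with `‖S z_t - p‖ ≤ ‖z_t - p‖`, the points
`x_t` stay within `‖f p - p‖ / (1 - ρ)` of `p` and the two middle terms are `O(t / (1 - t))`.
Hence `A x_t → A p` and `(x_t - z_t) - λ(t) (A x_t - A p) → 0`, so `x_t - z_t → 0`.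
-/

open Filter Topology

section InnerProductSpace

variable {H : Type*} [NormedAddCommGroup H] [InnerProductSpace ℝ H] {Q : Set H} {P : H → H}

theorem norm_proj_sub_sq_add_le (hPmem : ∀ x, P x ∈ Q)
    (hP : ∀ x, ∀ y ∈ Q, ⟪x - P x, y - P x⟫ ≤ 0) (v w : H) :
    ‖P v - P w‖ ^ 2 + ‖(v - w) - (P v - P w)‖ ^ 2 ≤ ‖v - w‖ ^ 2 := by
  have hv := hP v (P w) (hPmem w)
  have hw := hP w (P v) (hPmem v)
  simp only [← real_inner_self_eq_norm_sq, inner_sub_left, inner_sub_right, real_inner_comm]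
    at hv hw ⊢
  linarith

theorem proj_eq_of_forall_inner_le (hPmem : ∀ x, P x ∈ Q)
    (hP : ∀ x, ∀ y ∈ Q, ⟪x - P x, y - P x⟫ ≤ 0) {v u : H} (hu : u ∈ Q)
    (h : ∀ y ∈ Q, ⟪v - u, y - u⟫ ≤ 0) : P v = u := by
  have h₁ := hP v u hu
  have h₂ := h (P v) (hPmem v)
  have hsq : ⟪u - P v, u - P v⟫ = ⟪v - P v, u - P v⟫ + ⟪v - u, P v - u⟫ := by
    simp only [inner_sub_left, inner_sub_right]
    ring
  have hzero : u - P v = 0 := by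
    rw [← real_inner_self_nonpos]
    linarith
  exact (sub_eq_zero.mp hzero).symm

theorem proj_sub_smul_eq_self (hPmem : ∀ x, P x ∈ Q)
    (hP : ∀ x, ∀ y ∈ Q, ⟪x - P x, y - P x⟫ ≤ 0) {p g : H} (hp : p ∈ Q)
    (hg : ∀ y ∈ Q, 0 ≤ ⟪g, y - p⟫) {r : ℝ} (hr : 0 ≤ r) : P (p - r • g) = p := by
  refine proj_eq_of_forall_inner_le hPmem hP hp fun y hy => ?_
  rw [sub_sub_cancel_left, inner_neg_left, real_inner_smul_left, neg_nonpos]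
  exact mul_nonneg hr (hg y hy)

theorem norm_sub_smul_sq (u e : H) (r : ℝ) :
    ‖u - r • e‖ ^ 2 = ‖u‖ ^ 2 - 2 * r * ⟪u, e⟫ + r ^ 2 * ‖e‖ ^ 2 := by
  rw [norm_sub_sq_real, real_inner_smul_right, norm_smul, Real.norm_eq_abs, mul_pow, sq_abs]
  ring

theorem norm_sub_smul_sub_sub_smul_sq_le {u v g h : H} {ν r : ℝ}
    (hgh : ν * ‖g - h‖ ^ 2 ≤ ⟪g - h, u - v⟫) (hr : 0 ≤ r) :
    ‖(u - r • g) - (v - r • h)‖ ^ 2 ≤ ‖u - v‖ ^ 2 - r * (2 * ν - r) * ‖g - h‖ ^ 2 := by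
  have hsplit : (u - r • g) - (v - r • h) = (u - v) - r • (g - h) := by module
  rw [hsplit, norm_sub_smul_sq, real_inner_comm]
  nlinarith [mul_le_mul_of_nonneg_left hgh hr]

theorem norm_proj_step_sub_sq_add_le (hPmem : ∀ x, P x ∈ Q)
    (hP : ∀ x, ∀ y ∈ Q, ⟪x - P x, y - P x⟫ ≤ 0) {x p g h : H} {ν r : ℝ}
    (hgh : ν * ‖g - h‖ ^ 2 ≤ ⟪g - h, x - p⟫) (hr : 0 ≤ r) (hfix : P (p - r • h) = p) :
    ‖P (x - r • g) - p‖ ^ 2 + ‖(x - P (x - r • g)) - r • (g - h)‖ ^ 2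
      + r * (2 * ν - r) * ‖g - h‖ ^ 2 ≤ ‖x - p‖ ^ 2 := by
  have hfirm := norm_proj_sub_sq_add_le hPmem hP (x - r • g) (p - r • h)
  have hsplit : (x - r • g - (p - r • h)) - (P (x - r • g) - p)
      = (x - P (x - r • g)) - r • (g - h) := by module
  rw [hfix, hsplit] at hfirm
  linarith [norm_sub_smul_sub_sub_smul_sq_le hgh hr]

section ConvexCombination

variable {x u w p : H} {t : ℝ}

theorem norm_sub_le_of_eq_smul_add_smul (ht₀ : 0 ≤ t) (ht₁ : t ≤ 1)
    (hx : x = t • u + (1 - t) • w) : ‖x - p‖ ≤ t * ‖u - p‖ + (1 - t) * ‖w - p‖ := by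
  have hsplit : x - p = t • (u - p) + (1 - t) • (w - p) := by rw [hx]; module
  rw [hsplit]
  refine (norm_add_le _ _).trans_eq ?_
  rw [norm_smul, norm_smul, Real.norm_of_nonneg ht₀, Real.norm_of_nonneg (sub_nonneg.2 ht₁)]

theorem norm_sub_le_div_of_eq_smul_add_smul {ρ D : ℝ} (ht₀ : 0 < t) (ht₁ : t ≤ 1) (hρ : ρ < 1)
    (hx : x = t • u + (1 - t) • w) (hu : ‖u - p‖ ≤ ρ * ‖x - p‖ + D)
    (hw : ‖w - p‖ ≤ ‖x - p‖) : ‖x - p‖ ≤ D / (1 - ρ) := by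
  have hconv := norm_sub_le_of_eq_smul_add_smul (p := p) ht₀.le ht₁ hx
  rw [le_div_iff₀ (sub_pos.2 hρ)]
  nlinarith [mul_le_mul_of_nonneg_left hu ht₀.le,
    mul_le_mul_of_nonneg_left hw (sub_nonneg.2 ht₁)]

theorem one_sub_mul_le_of_eq_smul_add_smul {δ : ℝ} (ht₀ : 0 ≤ t) (ht₁ : t ≤ 1)
    (hx : x = t • u + (1 - t) • w) (hw : ‖w - p‖ ^ 2 ≤ ‖x - p‖ ^ 2 - δ) :
    (1 - t) * δ ≤ t * ‖u - p‖ ^ 2 := by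
  have hconv := norm_sub_le_of_eq_smul_add_smul (p := p) ht₀ ht₁ hx
  have hsq := pow_le_pow_left₀ (norm_nonneg _) hconv 2
  nlinarith [mul_nonneg (mul_nonneg ht₀ (sub_nonneg.2 ht₁)) (sq_nonneg (‖u - p‖ - ‖w - p‖)),
    mul_nonneg ht₀ (sq_nonneg ‖x - p‖)]

theorem one_sub_mul_le_mul_div_sq_of_eq_smul_add_smul {ρ D δ : ℝ} (ht₀ : 0 < t) (ht₁ : t ≤ 1)
    (hρ₀ : 0 ≤ ρ) (hρ₁ : ρ < 1) (hx : x = t • u + (1 - t) • w) (hu : ‖u - p‖ ≤ ρ * ‖x - p‖ + D)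
    (hδ : 0 ≤ δ) (hw : ‖w - p‖ ^ 2 ≤ ‖x - p‖ ^ 2 - δ) :
    (1 - t) * δ ≤ t * (D / (1 - ρ)) ^ 2 := by
  have hwx : ‖w - p‖ ≤ ‖x - p‖ := (pow_le_pow_iff_left₀ (norm_nonneg _) (norm_nonneg _)
    two_ne_zero).1 (by linarith)
  have hxM := norm_sub_le_div_of_eq_smul_add_smul ht₀ ht₁ hρ₁ hx hu hwx
  have huM : ‖u - p‖ ≤ D / (1 - ρ) := by
    have hD : D = (1 - ρ) * (D / (1 - ρ)) := (mul_div_cancel₀ D (sub_pos.2 hρ₁).ne').symm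
    nlinarith [mul_le_mul_of_nonneg_left hxM hρ₀]
  calc (1 - t) * δ ≤ t * ‖u - p‖ ^ 2 := one_sub_mul_le_of_eq_smul_add_smul ht₀.le ht₁ hx hw
    _ ≤ t * (D / (1 - ρ)) ^ 2 := by gcongr

end ConvexCombination

end InnerProductSpace

theorem tendsto_zero_of_one_sub_mul_sq_le {g : ℝ → ℝ} (C : ℝ)
    (h : ∀ t ∈ Set.Ioc (0 : ℝ) 1, (1 - t) * g t ^ 2 ≤ t * C) :
    Tendsto g (𝓝[>] 0) (𝓝 0) := by
  have hbound : Tendsto (fun t : ℝ => √(t * C / (1 - t))) (𝓝[>] 0) (𝓝 0) := by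
    have hlim : Tendsto (fun t : ℝ => t * C / (1 - t)) (𝓝 0) (𝓝 (0 * C / (1 - 0))) :=
      (tendsto_id.mul_const C).div (tendsto_const_nhds.sub tendsto_id) (by norm_num)
    simpa using (hlim.sqrt).mono_left nhdsWithin_le_nhds
  refine squeeze_zero_norm' ?_ hbound
  filter_upwards [Ioo_mem_nhdsGT one_pos] with t ht
  refine Real.abs_le_sqrt ?_
  rw [le_div_iff₀ (sub_pos.2 ht.2), mul_comm]
  exact h t ⟨ht.1, ht.2.le⟩

theorem stmt_10_general {H : Type*} [NormedAddCommGroup H] [InnerProductSpace ℝ H]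
    (Q : Set H)
    (ν : ℝ)
    (A : H → H) (hA : ∀ x ∈ Q, ∀ y ∈ Q, ν * ‖A x - A y‖ ^ 2 ≤ ⟪A x - A y, x - y⟫)
    (P : H → H) (hPmem : ∀ x, P x ∈ Q)
    (hP : ∀ (x : H), ∀ y ∈ Q, ⟪x - P x, y - P x⟫ ≤ 0)
    (S : H → H)
    (hS : ∀ x ∈ Q, ∀ y ∈ Q, ‖S x - S y‖ ≤ ‖x - y‖)
    (ρ : ℝ) (hρ : ρ ∈ Set.Ico (0 : ℝ) 1)
    (f : H → H)
    (hf : ∀ x ∈ Q, ∀ y ∈ Q, ‖f x - f y‖ ≤ ρ * ‖x - y‖)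
    (a b : ℝ) (hab : 0 < a ∧ a < b ∧ b < 2 * ν)
    (lam : ℝ → ℝ) (hlam : ∀ t ∈ Set.Ioc (0 : ℝ) 1, lam t ∈ Set.Icc a b)
    (Ω : Set H)
    (hΩ : Ω = {x : H | x ∈ Q ∧ S x = x} ∩ {q : H | q ∈ Q ∧ ∀ x ∈ Q, 0 ≤ ⟪A q, x - q⟫})
    (hΩne : Ω.Nonempty)
    (x : ℝ → H) (hxQ : ∀ t ∈ Set.Ioc (0 : ℝ) 1, x t ∈ Q)
    (hx : ∀ t ∈ Set.Ioc (0 : ℝ) 1,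
      x t = t • f (x t) + (1 - t) • S (P (x t - lam t • A (x t)))) :
    Filter.Tendsto (fun t => ‖x t - P (x t - lam t • A (x t))‖)
      (nhdsWithin 0 (Set.Ioi (0 : ℝ))) (nhds 0) := by
  obtain ⟨p, ⟨hpQ, hSp⟩, -, hpVI⟩ := hΩ ▸ hΩne
  obtain ⟨ha, -, hb⟩ := hab
  set M := ‖f p - p‖ / (1 - ρ)
  set c := a * (2 * ν - b)
  have hc : 0 < c := mul_pos ha (by linarith)
  have hgap : ∀ t ∈ Set.Ioc (0 : ℝ) 1, (1 - t) * (c * ‖A (x t) - A p‖ ^ 2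
      + ‖x t - P (x t - lam t • A (x t)) - lam t • (A (x t) - A p)‖ ^ 2) ≤ t * M ^ 2 := by
    intro t ht
    obtain ⟨hat, hbt⟩ := hlam t ht
    have hlam₀ : 0 ≤ lam t := ha.le.trans hat
    have hstep := norm_proj_step_sub_sq_add_le hPmem hP (hA _ (hxQ t ht) p hpQ) hlam₀
      (proj_sub_smul_eq_self hPmem hP hpQ hpVI hlam₀)
    have hSz : ‖S (P (x t - lam t • A (x t))) - p‖ ≤ ‖P (x t - lam t • A (x t)) - p‖ := by
      simpa only [hSp] using hS _ (hPmem _) p hpQ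
    have hc_le : c ≤ lam t * (2 * ν - lam t) := by nlinarith
    refine one_sub_mul_le_mul_div_sq_of_eq_smul_add_smul (p := p) ht.1 ht.2 hρ.1 hρ.2 (hx t ht)
      ?_ (by positivity) ?_
    · linarith [norm_sub_le_norm_sub_add_norm_sub (f (x t)) (f p) p, hf _ (hxQ t ht) p hpQ]
    · nlinarith [pow_le_pow_left₀ (norm_nonneg _) hSz 2, sq_nonneg ‖A (x t) - A p‖]
  have he : Tendsto (fun t => ‖A (x t) - A p‖) (𝓝[>] 0) (𝓝 0) := by
    refine tendsto_zero_of_one_sub_mul_sq_le (M ^ 2 / c) fun t ht => ?_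
    rw [← mul_div_assoc, le_div_iff₀ hc]
    nlinarith [hgap t ht, mul_nonneg (sub_nonneg.2 ht.2)
      (sq_nonneg ‖x t - P (x t - lam t • A (x t)) - lam t • (A (x t) - A p)‖)]
  have hr : Tendsto (fun t => ‖x t - P (x t - lam t • A (x t)) - lam t • (A (x t) - A p)‖)
      (𝓝[>] 0) (𝓝 0) := by
    refine tendsto_zero_of_one_sub_mul_sq_le (M ^ 2) fun t ht => ?_
    nlinarith [hgap t ht, mul_nonneg (mul_nonneg hc.le (sub_nonneg.2 ht.2))
      (sq_nonneg ‖A (x t) - A p‖)]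
  refine squeeze_zero' (Eventually.of_forall fun t => norm_nonneg _) ?_
    (by simpa using hr.add (he.const_mul b))
  filter_upwards [Ioc_mem_nhdsGT one_pos] with t ht
  obtain ⟨hat, hbt⟩ := hlam t ht
  calc ‖x t - P (x t - lam t • A (x t))‖
      ≤ ‖x t - P (x t - lam t • A (x t)) - lam t • (A (x t) - A p)‖
        + ‖lam t • (A (x t) - A p)‖ := norm_le_norm_sub_add _ _
    _ ≤ _ := by
      rw [norm_smul, Real.norm_of_nonneg (ha.le.trans hat)]
      gcongr

/-- With `z_t = P_Q(x_t - λ(t) A x_t)`, one has `‖x_t - z_t‖ → 0` as `t → 0⁺`. -/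
theorem stmt_10 {H : Type*} [NormedAddCommGroup H] [InnerProductSpace ℝ H] [CompleteSpace H]
    (Q : Set H) (hQne : Q.Nonempty) (hQclosed : IsClosed Q) (hQconvex : Convex ℝ Q)
    (ν : ℝ) (hν : 0 < ν)
    (A : H → H) (hA : ∀ x ∈ Q, ∀ y ∈ Q, ν * ‖A x - A y‖ ^ 2 ≤ ⟪A x - A y, x - y⟫)
    (P : H → H) (hPmem : ∀ x, P x ∈ Q)
    (hP : ∀ (x : H), ∀ y ∈ Q, ⟪x - P x, y - P x⟫ ≤ 0)
    (S : H → H) (hSmem : ∀ x ∈ Q, S x ∈ Q)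
    (hS : ∀ x ∈ Q, ∀ y ∈ Q, ‖S x - S y‖ ≤ ‖x - y‖)
    (ρ : ℝ) (hρ : ρ ∈ Set.Ico (0 : ℝ) 1)
    (f : H → H) (hfmem : ∀ x ∈ Q, f x ∈ Q)
    (hf : ∀ x ∈ Q, ∀ y ∈ Q, ‖f x - f y‖ ≤ ρ * ‖x - y‖)
    (a b : ℝ) (hab : 0 < a ∧ a < b ∧ b < 2 * ν)
    (lam : ℝ → ℝ) (hlam : ∀ t ∈ Set.Ioc (0 : ℝ) 1, lam t ∈ Set.Icc a b)
    (Ω : Set H)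
    (hΩ : Ω = {x : H | x ∈ Q ∧ S x = x} ∩ {q : H | q ∈ Q ∧ ∀ x ∈ Q, 0 ≤ ⟪A q, x - q⟫})
    (hΩne : Ω.Nonempty)
    (x : ℝ → H) (hxQ : ∀ t ∈ Set.Ioc (0 : ℝ) 1, x t ∈ Q)
    (hx : ∀ t ∈ Set.Ioc (0 : ℝ) 1,
      x t = t • f (x t) + (1 - t) • S (P (x t - lam t • A (x t)))) :
    Filter.Tendsto (fun t => ‖x t - P (x t - lam t • A (x t))‖)
      (nhdsWithin 0 (Set.Ioi (0 : ℝ))) (nhds 0) :=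
  stmt_10_general Q ν A hA P hPmem hP S hS ρ hρ f hf a b hab lam hlam Ω hΩ hΩne x hxQ hx
end

section
/- Let H be a real Hilbert space, Q ⊆ H a nonempty closed convex set, ν > 0, A : Q → H a ν-inverse strongly monotone operator, S : Q → Q a nonexpansive mapping, f : Q → Q a contraction with coefficient ρ ∈ [0,1), 0 < a < b < 2ν, and λ : (0,1] → [a,b]. Assume Ω = Fix(S) ∩ S_VI(A,Q) is nonempty, let q* be the unique solution of the variational problem (q* ∈ Ω and ⟨f(q*) − q*, x − q*⟩ ≤ 0 for all x ∈ Ω), and for each t ∈ (0,1] let x_t ∈ Q be the unique point with x_t = t·f(x_t) + (1 − t)·S(P_Q(x_t − λ(t)·A x_t)). Then limsup_{t→0⁺} ⟨f(q*) − q*, x_t − q*⟩ ≤ 0. -/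
/-!
Since `S P_Q (I - λA)` fixes `q*` and is nonexpansive for `λ ≤ 2ν`, the defining equation of `x_t`
gives `(1 - ρ) ‖x_t - q*‖² ≤ ⟪f q* - q*, x_t - q*⟫`, so the net is bounded and
`‖x_t - S P_Q (x_t - λ(t) A x_t)‖ = t ‖f x_t - S P_Q (x_t - λ(t) A x_t)‖ → 0`.
Along any ultrafilter finer than `t → 0⁺` (which replaces the extraction of subsequences), `x_t`
converges weakly to some `ω ∈ Q` and `λ(t)` to some `l ∈ [a, b]`. Browder's demiclosedness
principle makes `ω` a fixed point of `S P_Q (I - lA)`, and these fixed points are exactly `Ω`.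
Hence every such limit of `⟪f q* - q*, x_t - q*⟫` is `⟪f q* - q*, ω - q*⟫ ≤ 0`.
-/

open scoped RealInnerProductSpace
open Filter Topology InnerProductSpace Set

theorem IsCompact.exists_tendsto_of_eventually_mem {α X : Type*} [TopologicalSpace X] {K : Set X}
    (hK : IsCompact K) (U : Ultrafilter α) {g : α → X} (hg : ∀ᶠ t in (U : Filter α), g t ∈ K) :
    ∃ L ∈ K, Tendsto g U (𝓝 L) :=
  hK.ultrafilter_le_nhds (U.map g) (le_principal_iff.2 hg)

theorem limsup_le_of_forall_ultrafilter_tendsto {α : Type*} {F : Filter α} {g : α → ℝ} {c : ℝ}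
    (hg : IsCoboundedUnder (· ≤ ·) F g)
    (h : ∀ U : Ultrafilter α, ↑U ≤ F → ∃ L ≤ c, Tendsto g U (𝓝 L)) : limsup g F ≤ c := by
  refine le_of_forall_pos_le_add fun ε hε =>
    limsup_le_of_le hg (mem_iff_ultrafilter.2 fun U hU => ?_)
  obtain ⟨L, hL, hgL⟩ := h U hU
  exact (hgL.eventually (eventually_lt_nhds (by linarith))).mono fun t ht => ht.le

section WeakLimits

variable {H : Type*} [NormedAddCommGroup H] [InnerProductSpace ℝ H] {α : Type*}

theorem IsClosed.mem_of_tendsto_toWeakSpace {Q : Set H} (hQc : IsClosed Q) (hQv : Convex ℝ Q)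
    {F : Filter α} [F.NeBot] {x : α → H} {ω : H}
    (hω : Tendsto (fun t => toWeakSpace ℝ H (x t)) F (𝓝 (toWeakSpace ℝ H ω)))
    (hxQ : ∀ᶠ t in F, x t ∈ Q) : ω ∈ Q := by
  have hcl := mem_closure_of_tendsto hω (hxQ.mono fun t ht => mem_image_of_mem _ ht)
  rw [← hQv.toWeakSpace_closure ℝ, hQc.closure_eq] at hcl
  obtain ⟨z, hz, hzω⟩ := hcl
  rwa [← (toWeakSpace ℝ H).injective hzω]

variable [CompleteSpace H]

theorem tendsto_toWeakSpace_iff {F : Filter α} {x : α → H} {ω : H} :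
    Tendsto (fun t => toWeakSpace ℝ H (x t)) F (𝓝 (toWeakSpace ℝ H ω)) ↔
      ∀ y : H, Tendsto (fun t => ⟪y, x t⟫) F (𝓝 ⟪y, ω⟫) := by
  have hinj : Function.Injective (topDualPairing ℝ H).flip := fun u v huv =>
    ext_inner_left ℝ fun y => by simpa using LinearMap.congr_fun huv (toDual ℝ H y)
  refine (WeakBilin.tendsto_iff_forall_eval_tendsto (topDualPairing ℝ H).flip hinj).trans
    ⟨fun h y => h (toDual ℝ H y), fun h ℓ => ?_⟩
  have hℓ := h ((toDual ℝ H).symm ℓ)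
  simp only [toDual_symm_apply] at hℓ
  exact hℓ

theorem Ultrafilter.exists_tendsto_toWeakSpace (U : Ultrafilter α) {x : α → H} {B : ℝ}
    (hx : ∀ᶠ t in (U : Filter α), ‖x t‖ ≤ B) :
    ∃ ω : H, Tendsto (fun t => toWeakSpace ℝ H (x t)) U (𝓝 (toWeakSpace ℝ H ω)) := by
  have hbdd (y : H) : ∀ᶠ t in (U : Filter α), ⟪y, x t⟫ ∈ Icc (-(‖y‖ * B)) (‖y‖ * B) :=
    hx.mono fun t ht => abs_le.1 <| (abs_real_inner_le_norm y (x t)).trans <|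
      mul_le_mul_of_nonneg_left ht (norm_nonneg y)
  choose ℓ hℓB hℓ using fun y => isCompact_Icc.exists_tendsto_of_eventually_mem U (hbdd y)
  have hadd (y z : H) : ℓ (y + z) = ℓ y + ℓ z :=
    tendsto_nhds_unique (hℓ (y + z)) (by simpa only [inner_add_left] using (hℓ y).add (hℓ z))
  have hsmul (r : ℝ) (y : H) : ℓ (r • y) = r * ℓ y :=
    tendsto_nhds_unique (hℓ (r • y))
      (by simpa only [real_inner_smul_left] using (hℓ y).const_mul r)
  have hnorm (y : H) : ‖ℓ y‖ ≤ B * ‖y‖ := by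
    rw [Real.norm_eq_abs, abs_le, mul_comm]
    exact hℓB y
  let Λ : StrongDual ℝ H := LinearMap.mkContinuous ⟨⟨ℓ, hadd⟩, hsmul⟩ B hnorm
  refine ⟨(toDual ℝ H).symm Λ, tendsto_toWeakSpace_iff.2 fun y => ?_⟩
  rw [real_inner_comm, toDual_symm_apply]
  exact hℓ y

/-- Browder's demiclosedness principle. -/
theorem isFixedPt_of_tendsto_toWeakSpace {Q : Set H} {T : H → H}
    (hT : ∀ z ∈ Q, ∀ z' ∈ Q, ‖T z - T z'‖ ≤ ‖z - z'‖) {F : Filter α} [F.NeBot]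
    {x : α → H} {ω : H} {B : ℝ} (hxQ : ∀ᶠ t in F, x t ∈ Q) (hωQ : ω ∈ Q)
    (hB : ∀ᶠ t in F, ‖x t - ω‖ ≤ B)
    (hω : Tendsto (fun t => toWeakSpace ℝ H (x t)) F (𝓝 (toWeakSpace ℝ H ω)))
    (hres : Tendsto (fun t => ‖x t - T (x t)‖) F (𝓝 0)) : Function.IsFixedPt T ω := by
  set v := ω - T ω
  have hinner : Tendsto (fun t => ⟪v, x t - ω⟫) F (𝓝 0) := by
    simpa only [inner_sub_right, sub_self] using (tendsto_toWeakSpace_iff.1 hω v).sub_const ⟪v, ω⟫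
  have hle : ∀ᶠ t in F,
      ‖v‖ ^ 2 ≤ ‖x t - T (x t)‖ ^ 2 + 2 * B * ‖x t - T (x t)‖ - 2 * ⟪v, x t - ω⟫ := by
    filter_upwards [hxQ, hB] with t ht htB
    have htri : ‖x t - T ω‖ ≤ ‖x t - T (x t)‖ + ‖x t - ω‖ :=
      (norm_sub_le_norm_sub_add_norm_sub _ _ _).trans (add_le_add_right (hT _ ht _ hωQ) _)
    have hexp : ‖x t - T ω‖ ^ 2 = ‖x t - ω‖ ^ 2 + 2 * ⟪v, x t - ω⟫ + ‖v‖ ^ 2 := by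
      rw [← sub_add_sub_cancel (x t) ω (T ω), norm_add_sq_real, real_inner_comm]
    nlinarith [norm_nonneg (x t - T ω), norm_nonneg (x t - T (x t)), norm_nonneg (x t - ω)]
  have hlim : Tendsto (fun t => ‖x t - T (x t)‖ ^ 2 + 2 * B * ‖x t - T (x t)‖ - 2 * ⟪v, x t - ω⟫)
      F (𝓝 0) := by
    simpa using ((hres.pow 2).add (hres.const_mul (2 * B))).sub (hinner.const_mul 2)
  have hv : ‖v‖ ^ 2 ≤ 0 := ge_of_tendsto hlim hle
  exact (sub_eq_zero.1 (norm_eq_zero.1 (by nlinarith [norm_nonneg v]))).symm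

theorem limsup_inner_sub_le_of_forall_tendsto_toWeakSpace {F : Filter α} [F.NeBot] {x : α → H}
    {c q : H} {M : ℝ} (hM : ∀ᶠ t in F, ‖x t - q‖ ≤ M)
    (h : ∀ U : Ultrafilter α, ↑U ≤ F → ∀ ω : H,
      Tendsto (fun t => toWeakSpace ℝ H (x t)) U (𝓝 (toWeakSpace ℝ H ω)) → ⟪c, ω - q⟫ ≤ 0) :
    limsup (fun t => ⟪c, x t - q⟫) F ≤ 0 := by
  have hbelow : ∀ᶠ t in F, -(‖c‖ * M) ≤ ⟪c, x t - q⟫ := hM.mono fun t ht => by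
    have := neg_abs_le ⟪c, x t - q⟫
    nlinarith [abs_real_inner_le_norm c (x t - q), norm_nonneg c]
  refine limsup_le_of_forall_ultrafilter_tendsto
    (isBoundedUnder_of_eventually_ge hbelow).isCoboundedUnder_le fun U hU => ?_
  obtain ⟨ω, hω⟩ := U.exists_tendsto_toWeakSpace (B := M + ‖q‖) <|
    (hM.filter_mono hU).mono fun t ht => (norm_le_norm_add_norm_sub' (x t) q).trans (by linarith)
  exact ⟨_, h U hU ω hω, by
    simpa only [inner_sub_right] using (tendsto_toWeakSpace_iff.1 hω c).sub_const ⟪c, q⟫⟩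

end WeakLimits

section Operators

variable {H : Type*} [NormedAddCommGroup H] [InnerProductSpace ℝ H]

structure IsMetricProjection (Q : Set H) (P : H → H) : Prop where
  mem : ∀ x, P x ∈ Q
  inner_sub_le : ∀ x, ∀ y ∈ Q, ⟪x - P x, y - P x⟫ ≤ 0

def IsInverseStronglyMonotoneOn (ν : ℝ) (A : H → H) (Q : Set H) : Prop :=
  ∀ x ∈ Q, ∀ y ∈ Q, ν * ‖A x - A y‖ ^ 2 ≤ ⟪A x - A y, x - y⟫

/-- `Fix(S) ∩ S_VI(A, Q)`, in the shape of `hΩ` so that `subst hΩ` applies. -/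
def fixInterVI (Q : Set H) (S A : H → H) : Set H :=
  {x : H | x ∈ Q ∧ S x = x} ∩ {q : H | q ∈ Q ∧ ∀ x ∈ Q, 0 ≤ ⟪A q, x - q⟫}

theorem mem_fixInterVI {Q : Set H} {S A : H → H} {z : H} :
    z ∈ fixInterVI Q S A ↔ z ∈ Q ∧ S z = z ∧ ∀ y ∈ Q, 0 ≤ ⟪A z, y - z⟫ :=
  ⟨fun ⟨⟨hz, hSz⟩, _, hVI⟩ => ⟨hz, hSz, hVI⟩, fun ⟨hz, hSz, hVI⟩ => ⟨⟨hz, hSz⟩, hz, hVI⟩⟩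

namespace IsMetricProjection

variable {Q : Set H} {P : H → H}

/-- Firm nonexpansiveness of the metric projection. -/
theorem norm_sub_sq_add_norm_sub_sq_le (hP : IsMetricProjection Q P) (u v : H) :
    ‖P u - P v‖ ^ 2 + ‖(u - P u) - (v - P v)‖ ^ 2 ≤ ‖u - v‖ ^ 2 := by
  have hu := hP.inner_sub_le u (P v) (hP.mem v)
  have hv := hP.inner_sub_le v (P u) (hP.mem u)
  have hcross : ⟪P u - P v, (u - P u) - (v - P v)⟫
      = -⟪u - P u, P v - P u⟫ - ⟪v - P v, P u - P v⟫ := by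
    simp only [inner_sub_left, inner_sub_right, real_inner_comm]
    ring
  rw [show u - v = (P u - P v) + ((u - P u) - (v - P v)) by abel, norm_add_sq_real]
  linarith

theorem norm_sub_le (hP : IsMetricProjection Q P) (u v : H) : ‖P u - P v‖ ≤ ‖u - v‖ :=
  (sq_le_sq₀ (norm_nonneg _) (norm_nonneg _)).1 <|
    le_of_add_le_of_nonneg_left (hP.norm_sub_sq_add_norm_sub_sq_le u v) (sq_nonneg _)

theorem eq_of_forall_inner_sub_le (hP : IsMetricProjection Q P) {u z : H} (hz : z ∈ Q)
    (h : ∀ y ∈ Q, ⟪u - z, y - z⟫ ≤ 0) : P u = z := by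
  have h1 := hP.inner_sub_le u z hz
  have h2 := h (P u) (hP.mem u)
  have hsum : ⟪u - P u, z - P u⟫ + ⟪u - z, P u - z⟫ = ‖z - P u‖ ^ 2 := by
    rw [← real_inner_self_eq_norm_sq]
    simp only [inner_sub_left, inner_sub_right, real_inner_comm]
    ring
  have hzero : ‖z - P u‖ = 0 := by nlinarith [norm_nonneg (z - P u)]
  exact (sub_eq_zero.1 (norm_eq_zero.1 hzero)).symm

theorem apply_sub_smul_eq_self_iff (hP : IsMetricProjection Q P) {A : H → H} {l : ℝ} (hl : 0 < l)
    {z : H} (hz : z ∈ Q) : P (z - l • A z) = z ↔ ∀ y ∈ Q, 0 ≤ ⟪A z, y - z⟫ := by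
  have hsub : z - l • A z - z = (-l) • A z := by module
  refine ⟨fun h y hy => ?_, fun h => hP.eq_of_forall_inner_sub_le hz fun y hy => ?_⟩
  · have := hP.inner_sub_le (z - l • A z) y hy
    rw [h, hsub, real_inner_smul_left] at this
    nlinarith
  · rw [hsub, real_inner_smul_left]
    nlinarith [h y hy]

end IsMetricProjection

namespace IsInverseStronglyMonotoneOn

variable {ν : ℝ} {A : H → H} {Q : Set H}

theorem mul_norm_sub_le (hA : IsInverseStronglyMonotoneOn ν A Q) {x y : H} (hx : x ∈ Q)
    (hy : y ∈ Q) : ν * ‖A x - A y‖ ≤ ‖x - y‖ := by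
  rcases (norm_nonneg (A x - A y)).eq_or_lt with h0 | hpos
  · rw [← h0, mul_zero]
    exact norm_nonneg _
  · have := (hA x hx y hy).trans (real_inner_le_norm _ _)
    nlinarith

theorem norm_sub_smul_sub_sq_le (hA : IsInverseStronglyMonotoneOn ν A Q) {x y : H} (hx : x ∈ Q)
    (hy : y ∈ Q) {l : ℝ} (hl : 0 ≤ l) :
    ‖(x - l • A x) - (y - l • A y)‖ ^ 2 ≤ ‖x - y‖ ^ 2 - l * (2 * ν - l) * ‖A x - A y‖ ^ 2 := by
  rw [show (x - l • A x) - (y - l • A y) = (x - y) - l • (A x - A y) by module, norm_sub_sq_real,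
    real_inner_smul_right, norm_smul, Real.norm_eq_abs, abs_of_nonneg hl, real_inner_comm]
  nlinarith [mul_le_mul_of_nonneg_left (hA x hx y hy) hl]

theorem norm_sub_smul_sub_le (hA : IsInverseStronglyMonotoneOn ν A Q) {x y : H} (hx : x ∈ Q)
    (hy : y ∈ Q) {l : ℝ} (hl0 : 0 ≤ l) (hl : l ≤ 2 * ν) :
    ‖(x - l • A x) - (y - l • A y)‖ ≤ ‖x - y‖ :=
  (sq_le_sq₀ (norm_nonneg _) (norm_nonneg _)).1 <|
    (hA.norm_sub_smul_sub_sq_le hx hy hl0).trans <| sub_le_self _ <|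
      mul_nonneg (mul_nonneg hl0 (by linarith)) (sq_nonneg _)

end IsInverseStronglyMonotoneOn

end Operators

section ProjGradStep

variable {H : Type*} [NormedAddCommGroup H] [InnerProductSpace ℝ H]
variable {Q : Set H} {P S A : H → H} {ν l : ℝ}

def projGradStep (S P A : H → H) (l : ℝ) (z : H) : H := S (P (z - l • A z))

theorem norm_projGradStep_sub_le (hA : IsInverseStronglyMonotoneOn ν A Q)
    (hP : IsMetricProjection Q P) (hS : ∀ x ∈ Q, ∀ y ∈ Q, ‖S x - S y‖ ≤ ‖x - y‖)
    (hl0 : 0 ≤ l) (hl : l ≤ 2 * ν) {z z' : H} (hz : z ∈ Q) (hz' : z' ∈ Q) :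
    ‖projGradStep S P A l z - projGradStep S P A l z'‖ ≤ ‖z - z'‖ :=
  (hS _ (hP.mem _) _ (hP.mem _)).trans <|
    (hP.norm_sub_le _ _).trans (hA.norm_sub_smul_sub_le hz hz' hl0 hl)

theorem norm_projGradStep_sub_projGradStep_le (hP : IsMetricProjection Q P)
    (hS : ∀ x ∈ Q, ∀ y ∈ Q, ‖S x - S y‖ ≤ ‖x - y‖) (l m : ℝ) (z : H) :
    ‖projGradStep S P A l z - projGradStep S P A m z‖ ≤ |l - m| * ‖A z‖ :=
  calc ‖projGradStep S P A l z - projGradStep S P A m z‖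
      ≤ ‖(z - l • A z) - (z - m • A z)‖ :=
        (hS _ (hP.mem _) _ (hP.mem _)).trans (hP.norm_sub_le _ _)
    _ = |l - m| * ‖A z‖ := by
        rw [show (z - l • A z) - (z - m • A z) = (m - l) • A z by module, norm_smul,
          Real.norm_eq_abs, abs_sub_comm]

theorem projGradStep_eq_self_of_mem (hP : IsMetricProjection Q P) (hl : 0 < l) {q : H}
    (hq : q ∈ fixInterVI Q S A) : projGradStep S P A l q = q := by
  obtain ⟨hqQ, hSq, hVI⟩ := mem_fixInterVI.1 hq
  rw [projGradStep, (hP.apply_sub_smul_eq_self_iff hl hqQ).2 hVI, hSq]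

theorem norm_projGradStep_sub_le_of_mem (hA : IsInverseStronglyMonotoneOn ν A Q)
    (hP : IsMetricProjection Q P) (hS : ∀ x ∈ Q, ∀ y ∈ Q, ‖S x - S y‖ ≤ ‖x - y‖)
    (hl0 : 0 < l) (hl : l ≤ 2 * ν) {q z : H} (hq : q ∈ fixInterVI Q S A) (hz : z ∈ Q) :
    ‖projGradStep S P A l z - q‖ ≤ ‖z - q‖ := by
  simpa only [projGradStep_eq_self_of_mem hP hl0 hq] using
    norm_projGradStep_sub_le hA hP hS hl0.le hl hz (mem_fixInterVI.1 hq).1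

/-- Strict quasi-nonexpansiveness of `P_Q (I - l A)`. -/
theorem IsMetricProjection.apply_sub_smul_eq_self_of_norm_sub_le (hP : IsMetricProjection Q P)
    (hA : IsInverseStronglyMonotoneOn ν A Q) (hl0 : 0 < l) (hl : l < 2 * ν) {q z : H}
    (hq : q ∈ Q) (hPq : P (q - l • A q) = q) (hz : z ∈ Q)
    (h : ‖z - q‖ ≤ ‖P (z - l • A z) - q‖) : P (z - l • A z) = z := by
  have hfirm := hP.norm_sub_sq_add_norm_sub_sq_le (z - l • A z) (q - l • A q)
  rw [hPq] at hfirm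
  have hism := hA.norm_sub_smul_sub_sq_le hz hq hl0.le
  have hsq := pow_le_pow_left₀ (norm_nonneg _) h 2
  have hK : 0 < l * (2 * ν - l) := mul_pos hl0 (by linarith)
  have hAzq : ‖A z - A q‖ ^ 2 = 0 := by
    nlinarith [sq_nonneg ‖(z - l • A z - P (z - l • A z)) - (q - l • A q - q)‖,
      sq_nonneg ‖A z - A q‖]
  have hAeq : A z = A q := sub_eq_zero.1 (norm_eq_zero.1 (pow_eq_zero_iff two_ne_zero |>.1 hAzq))
  have hres : (z - l • A z - P (z - l • A z)) - (q - l • A q - q) = z - P (z - l • A z) := by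
    rw [hAeq]
    abel
  rw [hres] at hfirm
  have hzero : ‖z - P (z - l • A z)‖ = 0 := by
    nlinarith [norm_nonneg (z - P (z - l • A z)), sq_nonneg ‖P (z - l • A z) - q‖]
  exact (sub_eq_zero.1 (norm_eq_zero.1 hzero)).symm

theorem projGradStep_eq_self_iff (hA : IsInverseStronglyMonotoneOn ν A Q)
    (hP : IsMetricProjection Q P) (hS : ∀ x ∈ Q, ∀ y ∈ Q, ‖S x - S y‖ ≤ ‖x - y‖)
    (hl0 : 0 < l) (hl : l < 2 * ν) {q z : H} (hq : q ∈ fixInterVI Q S A) (hz : z ∈ Q) :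
    projGradStep S P A l z = z ↔ z ∈ fixInterVI Q S A := by
  refine ⟨fun hfix => ?_, projGradStep_eq_self_of_mem hP hl0⟩
  obtain ⟨hqQ, hSq, hVIq⟩ := mem_fixInterVI.1 hq
  have hfix' : S (P (z - l • A z)) = z := hfix
  have hPz : P (z - l • A z) = z := by
    refine hP.apply_sub_smul_eq_self_of_norm_sub_le hA hl0 hl hqQ
      ((hP.apply_sub_smul_eq_self_iff hl0 hqQ).2 hVIq) hz ?_
    calc ‖z - q‖ = ‖S (P (z - l • A z)) - S q‖ := by rw [hfix', hSq]
      _ ≤ ‖P (z - l • A z) - q‖ := hS _ (hP.mem _) _ hqQ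
  rw [hPz] at hfix'
  exact mem_fixInterVI.2 ⟨hz, hfix', (hP.apply_sub_smul_eq_self_iff hl0 hz).1 hPz⟩

end ProjGradStep

section ViscosityNet

variable {H : Type*} [NormedAddCommGroup H] [InnerProductSpace ℝ H]

theorem one_sub_mul_norm_sub_sq_le_inner {x y q fx fq : H} {t ρ : ℝ} (ht0 : 0 < t)
    (ht1 : t ≤ 1) (hx : x = t • fx + (1 - t) • y) (hy : ‖y - q‖ ≤ ‖x - q‖)
    (hf : ‖fx - fq‖ ≤ ρ * ‖x - q‖) : (1 - ρ) * ‖x - q‖ ^ 2 ≤ ⟪fq - q, x - q⟫ := by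
  have hdec : x - q = t • (fx - fq) + t • (fq - q) + (1 - t) • (y - q) := by
    rw [hx]
    module
  have hsplit := congrArg (⟪·, x - q⟫) hdec
  simp only [inner_add_left, real_inner_smul_left, real_inner_self_eq_norm_sq] at hsplit
  have hfx : ⟪fx - fq, x - q⟫ ≤ ρ * ‖x - q‖ ^ 2 := (real_inner_le_norm _ _).trans <| by
    nlinarith [mul_le_mul_of_nonneg_right hf (norm_nonneg (x - q))]
  have hyx : ⟪y - q, x - q⟫ ≤ ‖x - q‖ ^ 2 := (real_inner_le_norm _ _).trans <| by
    nlinarith [mul_le_mul_of_nonneg_right hy (norm_nonneg (x - q))]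
  have hscaled : t * ((1 - ρ) * ‖x - q‖ ^ 2) ≤ t * ⟪fq - q, x - q⟫ := by
    nlinarith [mul_le_mul_of_nonneg_left hfx ht0.le,
      mul_le_mul_of_nonneg_left hyx (sub_nonneg.2 ht1)]
  exact le_of_mul_le_mul_left hscaled ht0

theorem norm_le_div_of_mul_sq_le_inner {k : ℝ} (hk : 0 < k) {c v : H}
    (h : k * ‖v‖ ^ 2 ≤ ⟪c, v⟫) : ‖v‖ ≤ ‖c‖ / k := by
  rw [le_div_iff₀ hk]
  have hcv := h.trans (real_inner_le_norm c v)
  nlinarith [norm_nonneg v, norm_nonneg c]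

theorem tendsto_norm_sub_nhdsGT_zero {f : H → H} {x y : ℝ → H} {q : H} {ρ M : ℝ} (hρ : ρ ≤ 1)
    (hx : ∀ t ∈ Ioc 0 1, x t = t • f (x t) + (1 - t) • y t)
    (hy : ∀ t ∈ Ioc 0 1, ‖y t - q‖ ≤ ‖x t - q‖)
    (hf : ∀ t ∈ Ioc 0 1, ‖f (x t) - f q‖ ≤ ρ * ‖x t - q‖)
    (hM : ∀ t ∈ Ioc 0 1, ‖x t - q‖ ≤ M) :
    Tendsto (fun t => ‖x t - y t‖) (𝓝[>] 0) (𝓝 0) := by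
  have hle : ∀ t ∈ Ioc (0 : ℝ) 1, ‖x t - y t‖ ≤ t * (2 * M + ‖f q - q‖) := fun t ht => by
    have hxy : x t - y t = t • (f (x t) - y t) := by
      conv_lhs => rw [hx t ht]
      module
    have hfy : ‖f (x t) - y t‖ ≤ 2 * M + ‖f q - q‖ := by
      have h1 := norm_sub_le_norm_sub_add_norm_sub (f (x t)) q (y t)
      have h2 := norm_sub_le_norm_sub_add_norm_sub (f (x t)) (f q) q
      have h3 := mul_le_mul_of_nonneg_right hρ (norm_nonneg (x t - q))
      linarith [norm_sub_rev q (y t), hf t ht, hy t ht, hM t ht]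
    rw [hxy, norm_smul, Real.norm_eq_abs, abs_of_pos ht.1]
    exact mul_le_mul_of_nonneg_left hfy ht.1.le
  have ht : Tendsto (fun t : ℝ => t) (𝓝[>] 0) (𝓝 0) := nhdsWithin_le_nhds
  refine squeeze_zero' (Eventually.of_forall fun t => norm_nonneg _)
    (mem_of_superset (Ioc_mem_nhdsGT one_pos) hle) ?_
  simpa using ht.mul_const (2 * M + ‖f q - q‖)

variable [CompleteSpace H]

theorem mem_fixInterVI_of_tendsto_toWeakSpace {α : Type*} {Q : Set H} {P S A : H → H}
    {ν a b M : ℝ} (hQc : IsClosed Q) (hQv : Convex ℝ Q) (hν : 0 < ν)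
    (hA : IsInverseStronglyMonotoneOn ν A Q) (hP : IsMetricProjection Q P)
    (hS : ∀ x ∈ Q, ∀ y ∈ Q, ‖S x - S y‖ ≤ ‖x - y‖) (ha : 0 < a) (hb : b < 2 * ν)
    {U : Ultrafilter α} {lam : α → ℝ} {x : α → H} {q ω : H}
    (hlam : ∀ᶠ t in (U : Filter α), lam t ∈ Icc a b) (hxQ : ∀ᶠ t in (U : Filter α), x t ∈ Q)
    (hq : q ∈ fixInterVI Q S A) (hM : ∀ᶠ t in (U : Filter α), ‖x t - q‖ ≤ M)
    (hres : Tendsto (fun t => ‖x t - projGradStep S P A (lam t) (x t)‖) U (𝓝 0))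
    (hω : Tendsto (fun t => toWeakSpace ℝ H (x t)) U (𝓝 (toWeakSpace ℝ H ω))) :
    ω ∈ fixInterVI Q S A := by
  have hωQ := hQc.mem_of_tendsto_toWeakSpace hQv hω hxQ
  obtain ⟨l, ⟨hal, hlb⟩, hl⟩ := isCompact_Icc.exists_tendsto_of_eventually_mem U hlam
  have hqQ := (mem_fixInterVI.1 hq).1
  have hAx : ∀ᶠ t in (U : Filter α), ‖A (x t)‖ ≤ ‖A q‖ + M / ν := by
    filter_upwards [hxQ, hM] with t ht htM
    have hν' := (hA.mul_norm_sub_le ht hqQ).trans htM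
    have := norm_le_norm_add_norm_sub' (A (x t)) (A q)
    rw [← le_div_iff₀' hν] at hν'
    linarith
  have hres' : Tendsto (fun t => ‖x t - projGradStep S P A l (x t)‖) U (𝓝 0) := by
    refine squeeze_zero' (Eventually.of_forall fun t => norm_nonneg _) ?_
      (by simpa using hres.add ((hl.sub_const l).abs.mul_const (‖A q‖ + M / ν)))
    filter_upwards [hAx] with t ht
    calc ‖x t - projGradStep S P A l (x t)‖
        ≤ ‖x t - projGradStep S P A (lam t) (x t)‖
          + ‖projGradStep S P A (lam t) (x t) - projGradStep S P A l (x t)‖ :=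
          norm_sub_le_norm_sub_add_norm_sub _ _ _
      _ ≤ ‖x t - projGradStep S P A (lam t) (x t)‖ + |lam t - l| * (‖A q‖ + M / ν) :=
          add_le_add_right ((norm_projGradStep_sub_projGradStep_le hP hS _ _ _).trans
            (mul_le_mul_of_nonneg_left ht (abs_nonneg _))) _
  have hB : ∀ᶠ t in (U : Filter α), ‖x t - ω‖ ≤ M + ‖q - ω‖ :=
    hM.mono fun t ht => (norm_sub_le_norm_sub_add_norm_sub _ q _).trans (by linarith)
  have hfix := isFixedPt_of_tendsto_toWeakSpace
    (fun z hz z' hz' => norm_projGradStep_sub_le hA hP hS (by linarith) (by linarith) hz hz')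
    hxQ hωQ hB hω hres'
  exact (projGradStep_eq_self_iff hA hP hS (by linarith) (by linarith) hq hωQ).1 hfix

end ViscosityNet

theorem stmt_12_general {H : Type*} [NormedAddCommGroup H] [InnerProductSpace ℝ H] [CompleteSpace H]
    (Q : Set H) (hQclosed : IsClosed Q) (hQconvex : Convex ℝ Q)
    (ν : ℝ) (hν : 0 < ν)
    (A : H → H) (hA : ∀ x ∈ Q, ∀ y ∈ Q, ν * ‖A x - A y‖ ^ 2 ≤ ⟪A x - A y, x - y⟫)
    (P : H → H) (hPmem : ∀ x, P x ∈ Q)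
    (hP : ∀ (x : H), ∀ y ∈ Q, ⟪x - P x, y - P x⟫ ≤ 0)
    (S : H → H)
    (hS : ∀ x ∈ Q, ∀ y ∈ Q, ‖S x - S y‖ ≤ ‖x - y‖)
    (ρ : ℝ) (hρ : ρ ∈ Set.Ico (0 : ℝ) 1)
    (f : H → H)
    (hf : ∀ x ∈ Q, ∀ y ∈ Q, ‖f x - f y‖ ≤ ρ * ‖x - y‖)
    (a b : ℝ) (hab : 0 < a ∧ a < b ∧ b < 2 * ν)
    (lam : ℝ → ℝ) (hlam : ∀ t ∈ Set.Ioc (0 : ℝ) 1, lam t ∈ Set.Icc a b)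
    (Ω : Set H)
    (hΩ : Ω = {x : H | x ∈ Q ∧ S x = x} ∩ {q : H | q ∈ Q ∧ ∀ x ∈ Q, 0 ≤ ⟪A q, x - q⟫})
    (x : ℝ → H) (hxQ : ∀ t ∈ Set.Ioc (0 : ℝ) 1, x t ∈ Q)
    (hx : ∀ t ∈ Set.Ioc (0 : ℝ) 1,
      x t = t • f (x t) + (1 - t) • S (P (x t - lam t • A (x t))))
    (qstar : H) (hqstar : qstar ∈ Ω)
    (hqstarVI : ∀ y ∈ Ω, ⟪f qstar - qstar, y - qstar⟫ ≤ 0) :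
    Filter.limsup (fun t => ⟪f qstar - qstar, x t - qstar⟫)
      (nhdsWithin 0 (Set.Ioi (0 : ℝ))) ≤ 0 := by
  have hPQ : IsMetricProjection Q P := ⟨hPmem, hP⟩
  subst hΩ
  have hq : qstar ∈ fixInterVI Q S A := hqstar
  have hquasi : ∀ t ∈ Ioc 0 1,
      ‖projGradStep S P A (lam t) (x t) - qstar‖ ≤ ‖x t - qstar‖ := fun t ht =>
    norm_projGradStep_sub_le_of_mem hA hPQ hS (hab.1.trans_le (hlam t ht).1)
      ((hlam t ht).2.trans hab.2.2.le) hq (hxQ t ht)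
  have hfq : ∀ t ∈ Ioc 0 1, ‖f (x t) - f qstar‖ ≤ ρ * ‖x t - qstar‖ := fun t ht =>
    hf _ (hxQ t ht) _ (mem_fixInterVI.1 hq).1
  have hM : ∀ t ∈ Ioc 0 1, ‖x t - qstar‖ ≤ ‖f qstar - qstar‖ / (1 - ρ) := fun t ht =>
    norm_le_div_of_mul_sq_le_inner (sub_pos.2 hρ.2) <|
      one_sub_mul_norm_sub_sq_le_inner ht.1 ht.2 (hx t ht) (hquasi t ht) (hfq t ht)
  have hres := tendsto_norm_sub_nhdsGT_zero hρ.2.le hx hquasi hfq hM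
  have hI : ∀ᶠ t in 𝓝[>] (0 : ℝ), t ∈ Ioc 0 1 := Ioc_mem_nhdsGT one_pos
  refine limsup_inner_sub_le_of_forall_tendsto_toWeakSpace (hI.mono hM)
    fun U hU ω hω => hqstarVI ω ?_
  have hUI : ∀ᶠ t in (U : Filter ℝ), t ∈ Ioc 0 1 := hI.filter_mono hU
  exact mem_fixInterVI_of_tendsto_toWeakSpace hQclosed hQconvex hν hA hPQ hS hab.1 hab.2.2
    (hUI.mono hlam) (hUI.mono hxQ) hq (hUI.mono hM) (hres.mono_left hU) hω

/-- `limsup_{t→0⁺} ⟪f(q*) - q*, x_t - q*⟫ ≤ 0`, where `q*` is the unique solution of (VP). -/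
theorem stmt_12 {H : Type*} [NormedAddCommGroup H] [InnerProductSpace ℝ H] [CompleteSpace H]
    (Q : Set H) (hQne : Q.Nonempty) (hQclosed : IsClosed Q) (hQconvex : Convex ℝ Q)
    (ν : ℝ) (hν : 0 < ν)
    (A : H → H) (hA : ∀ x ∈ Q, ∀ y ∈ Q, ν * ‖A x - A y‖ ^ 2 ≤ ⟪A x - A y, x - y⟫)
    (P : H → H) (hPmem : ∀ x, P x ∈ Q)
    (hP : ∀ (x : H), ∀ y ∈ Q, ⟪x - P x, y - P x⟫ ≤ 0)
    (S : H → H) (hSmem : ∀ x ∈ Q, S x ∈ Q)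
    (hS : ∀ x ∈ Q, ∀ y ∈ Q, ‖S x - S y‖ ≤ ‖x - y‖)
    (ρ : ℝ) (hρ : ρ ∈ Set.Ico (0 : ℝ) 1)
    (f : H → H) (hfmem : ∀ x ∈ Q, f x ∈ Q)
    (hf : ∀ x ∈ Q, ∀ y ∈ Q, ‖f x - f y‖ ≤ ρ * ‖x - y‖)
    (a b : ℝ) (hab : 0 < a ∧ a < b ∧ b < 2 * ν)
    (lam : ℝ → ℝ) (hlam : ∀ t ∈ Set.Ioc (0 : ℝ) 1, lam t ∈ Set.Icc a b)
    (Ω : Set H)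
    (hΩ : Ω = {x : H | x ∈ Q ∧ S x = x} ∩ {q : H | q ∈ Q ∧ ∀ x ∈ Q, 0 ≤ ⟪A q, x - q⟫})
    (hΩne : Ω.Nonempty)
    (x : ℝ → H) (hxQ : ∀ t ∈ Set.Ioc (0 : ℝ) 1, x t ∈ Q)
    (hx : ∀ t ∈ Set.Ioc (0 : ℝ) 1,
      x t = t • f (x t) + (1 - t) • S (P (x t - lam t • A (x t))))
    (qstar : H) (hqstar : qstar ∈ Ω)
    (hqstarVI : ∀ y ∈ Ω, ⟪f qstar - qstar, y - qstar⟫ ≤ 0) :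
    Filter.limsup (fun t => ⟪f qstar - qstar, x t - qstar⟫)
      (nhdsWithin 0 (Set.Ioi (0 : ℝ))) ≤ 0 :=
  stmt_12_general Q hQclosed hQconvex ν hν A hA P hPmem hP S hS ρ hρ f hf a b hab lam hlam Ω hΩ x
    hxQ hx qstar hqstar hqstarVI
end

section
/- Let H be a real Hilbert space, Q ⊆ H a nonempty closed convex set, ν > 0, A : Q → H a ν-inverse strongly monotone operator, S : Q → Q a nonexpansive mapping, and f : Q → Q a contraction with coefficient ρ ∈ [0,1). Assume Ω = Fix(S) ∩ S_VI(A,Q) is nonempty. Let {α_n} ⊆ (0,1] and {λ_n} ⊆ [0,2ν] be arbitrary sequences, x_1 ∈ Q, and define x_{n+1} = α_n·f(x_n) + (1 − α_n)·S(P_Q(x_n − λ_n·A x_n)). Then for every q ∈ Ω and every n, ‖x_n − q‖ ≤ max{‖x_1 − q‖, (1/(1 − ρ))·‖f(q) − q‖}; in particular the sequence {x_n} is bounded in H. -/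
/-!
Fix `q ∈ Ω`. For `λ ∈ [0, 2ν]` the map `I - λA` is nonexpansive, `P_Q` is nonexpansive, and `q`
is a fixed point of `P_Q (I - λA)` because it solves the variational inequality; together with
`Sq = q` this gives `‖S (P_Q (x - λ A x)) - q‖ ≤ ‖x - q‖`. Hence
`‖x_{n+1} - q‖ ≤ α_n (ρ ‖x_n - q‖ + ‖f q - q‖) + (1 - α_n) ‖x_n - q‖`, and the right-hand side
is a convex combination that never exceeds `max {‖x_0 - q‖, ‖f q - q‖ / (1 - ρ)}`.
-/

open scoped RealInnerProductSpace

theorem le_max_of_le_convexComb {d α : ℕ → ℝ} {ρ c : ℝ} (hρ0 : 0 ≤ ρ) (hρ1 : ρ < 1)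
    (hα : ∀ n, α n ∈ Set.Icc (0 : ℝ) 1)
    (hd : ∀ n, d (n + 1) ≤ α n * (ρ * d n + c) + (1 - α n) * d n) (n : ℕ) :
    d n ≤ max (d 0) (1 / (1 - ρ) * c) := by
  set M := max (d 0) (1 / (1 - ρ) * c)
  have hρ' : 0 < 1 - ρ := by linarith
  have hc : c ≤ (1 - ρ) * M :=
    calc c = (1 - ρ) * (1 / (1 - ρ) * c) := by field_simp
      _ ≤ (1 - ρ) * M := mul_le_mul_of_nonneg_left (le_max_right _ _) hρ'.le
  induction n with
  | zero => exact le_max_left _ _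
  | succ n ih =>
    obtain ⟨hα0, hα1⟩ := hα n
    calc d (n + 1) ≤ α n * (ρ * d n + c) + (1 - α n) * d n := hd n
      _ ≤ α n * (ρ * M + (1 - ρ) * M) + (1 - α n) * M := by gcongr
      _ = M := by ring

section Projection

variable {H : Type*} [NormedAddCommGroup H] [InnerProductSpace ℝ H] {Q : Set H} {P : H → H}

theorem norm_sub_smul_le_of_mul_norm_sq_le_inner {d a : H} {ν t : ℝ}
    (h : ν * ‖a‖ ^ 2 ≤ ⟪a, d⟫) (ht0 : 0 ≤ t) (ht : t ≤ 2 * ν) : ‖d - t • a‖ ≤ ‖d‖ := by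
  have hsq : ‖d - t • a‖ ^ 2 ≤ ‖d‖ ^ 2 := by
    rw [norm_sub_sq_real, real_inner_smul_right, norm_smul, Real.norm_of_nonneg ht0,
      real_inner_comm]
    nlinarith [mul_nonneg ht0 (sq_nonneg ‖a‖)]
  exact (pow_le_pow_iff_left₀ (norm_nonneg _) (norm_nonneg _) two_ne_zero).mp hsq

theorem norm_proj_sub_proj_le (hPmem : ∀ x, P x ∈ Q)
    (hP : ∀ x, ∀ y ∈ Q, ⟪x - P x, y - P x⟫ ≤ 0) (x y : H) : ‖P x - P y‖ ≤ ‖x - y‖ := by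
  have hx := hP x (P y) (hPmem y)
  have hy := hP y (P x) (hPmem x)
  have hsq : ‖P x - P y‖ ^ 2 ≤ ⟪x - y, P x - P y⟫ := by
    rw [← real_inner_self_eq_norm_sq]
    have : ⟪x - y, P x - P y⟫ - ⟪P x - P y, P x - P y⟫
        = -⟪x - P x, P y - P x⟫ - ⟪y - P y, P x - P y⟫ := by
      simp only [inner_sub_left, inner_sub_right, real_inner_comm]; ring
    linarith
  have hcs := hsq.trans (real_inner_le_norm _ _)
  nlinarith [norm_nonneg (P x - P y), norm_nonneg (x - y)]

theorem proj_sub_smul_eq_self_s14 (hPmem : ∀ x, P x ∈ Q)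
    (hP : ∀ x, ∀ y ∈ Q, ⟪x - P x, y - P x⟫ ≤ 0) {q a : H} (hq : q ∈ Q)
    (hVI : ∀ x ∈ Q, 0 ≤ ⟪a, x - q⟫) {t : ℝ} (ht : 0 ≤ t) : P (q - t • a) = q := by
  set p := P (q - t • a)
  have hproj := hP (q - t • a) q hq
  have hsol := hVI p (hPmem _)
  have hsq : ‖q - p‖ ^ 2 ≤ 0 := by
    have hexpand : ‖q - p‖ ^ 2 = ⟪q - t • a - p, q - p⟫ - t * ⟪a, p - q⟫ := by
      rw [← real_inner_self_eq_norm_sq]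
      simp only [inner_sub_left, inner_sub_right, real_inner_smul_left, real_inner_smul_right,
        real_inner_comm]; ring
    nlinarith [mul_nonneg ht hsol]
  have hnorm : ‖q - p‖ = 0 := by nlinarith [norm_nonneg (q - p)]
  exact (sub_eq_zero.mp (norm_eq_zero.mp hnorm)).symm

theorem norm_proj_gradient_step_sub_le (hPmem : ∀ x, P x ∈ Q)
    (hP : ∀ x, ∀ y ∈ Q, ⟪x - P x, y - P x⟫ ≤ 0) {A : H → H} {ν t : ℝ} {x q : H}
    (hA : ν * ‖A x - A q‖ ^ 2 ≤ ⟪A x - A q, x - q⟫) (hq : q ∈ Q)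
    (hVI : ∀ y ∈ Q, 0 ≤ ⟪A q, y - q⟫) (ht0 : 0 ≤ t) (ht : t ≤ 2 * ν) :
    ‖P (x - t • A x) - q‖ ≤ ‖x - q‖ :=
  calc ‖P (x - t • A x) - q‖ = ‖P (x - t • A x) - P (q - t • A q)‖ := by
        rw [proj_sub_smul_eq_self_s14 hPmem hP hq hVI ht0]
    _ ≤ ‖(x - t • A x) - (q - t • A q)‖ := norm_proj_sub_proj_le hPmem hP _ _
    _ = ‖(x - q) - t • (A x - A q)‖ := by congr 1; module
    _ ≤ ‖x - q‖ := norm_sub_smul_le_of_mul_norm_sq_le_inner hA ht0 ht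

end Projection

theorem norm_convexComb_sub_le {E : Type*} [SeminormedAddCommGroup E] [NormedSpace ℝ E]
    {a : ℝ} (ha0 : 0 ≤ a) (ha1 : a ≤ 1) (u v q : E) :
    ‖a • u + (1 - a) • v - q‖ ≤ a * ‖u - q‖ + (1 - a) * ‖v - q‖ :=
  calc ‖a • u + (1 - a) • v - q‖ = ‖a • (u - q) + (1 - a) • (v - q)‖ := by congr 1; module
    _ ≤ ‖a • (u - q)‖ + ‖(1 - a) • (v - q)‖ := norm_add_le _ _
    _ = a * ‖u - q‖ + (1 - a) * ‖v - q‖ := by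
      rw [norm_smul, norm_smul, Real.norm_of_nonneg ha0, Real.norm_of_nonneg (by linarith)]

theorem stmt_14_general {H : Type*} [NormedAddCommGroup H] [InnerProductSpace ℝ H]
    (Q : Set H) (hQconvex : Convex ℝ Q)
    (ν : ℝ)
    (A : H → H) (hA : ∀ x ∈ Q, ∀ y ∈ Q, ν * ‖A x - A y‖ ^ 2 ≤ ⟪A x - A y, x - y⟫)
    (P : H → H) (hPmem : ∀ x, P x ∈ Q)
    (hP : ∀ (x : H), ∀ y ∈ Q, ⟪x - P x, y - P x⟫ ≤ 0)
    (S : H → H) (hSmem : ∀ x ∈ Q, S x ∈ Q)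
    (hS : ∀ x ∈ Q, ∀ y ∈ Q, ‖S x - S y‖ ≤ ‖x - y‖)
    (ρ : ℝ) (hρ : ρ ∈ Set.Ico (0 : ℝ) 1)
    (f : H → H) (hfmem : ∀ x ∈ Q, f x ∈ Q)
    (hf : ∀ x ∈ Q, ∀ y ∈ Q, ‖f x - f y‖ ≤ ρ * ‖x - y‖)
    (Ω : Set H)
    (hΩ : Ω = {x : H | x ∈ Q ∧ S x = x} ∩ {q : H | q ∈ Q ∧ ∀ x ∈ Q, 0 ≤ ⟪A q, x - q⟫})
    (hΩne : Ω.Nonempty)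
    (α lam : ℕ → ℝ)
    (hα : ∀ n, α n ∈ Set.Ioc (0 : ℝ) 1) (hlam : ∀ n, lam n ∈ Set.Icc (0 : ℝ) (2 * ν))
    (x : ℕ → H) (hx0 : x 0 ∈ Q)
    (hxrec : ∀ n, x (n + 1) = α n • f (x n) + (1 - α n) • S (P (x n - lam n • A (x n)))) :
    (∀ q ∈ Ω, ∀ n : ℕ, ‖x n - q‖ ≤ max ‖x 0 - q‖ ((1 / (1 - ρ)) * ‖f q - q‖)) ∧
      ∃ M : ℝ, ∀ n : ℕ, ‖x n‖ ≤ M := by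
  have hα' n : α n ∈ Set.Icc (0 : ℝ) 1 := Set.Ioc_subset_Icc_self (hα n)
  have hxQ n : x n ∈ Q := by
    induction n with
    | zero => exact hx0
    | succ n ih =>
      rw [hxrec]
      exact hQconvex (hfmem _ ih) (hSmem _ (hPmem _)) (hα' n).1 (by linarith [(hα' n).2])
        (by ring)
  have hdist : ∀ q ∈ Ω, ∀ n : ℕ, ‖x n - q‖ ≤ max ‖x 0 - q‖ ((1 / (1 - ρ)) * ‖f q - q‖) := by
    rintro q hq
    rw [hΩ] at hq
    obtain ⟨⟨hqQ, hSq⟩, -, hVI⟩ := hq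
    refine le_max_of_le_convexComb hρ.1 hρ.2 hα' fun n => ?_
    have hfx : ‖f (x n) - q‖ ≤ ρ * ‖x n - q‖ + ‖f q - q‖ :=
      (norm_sub_le_norm_sub_add_norm_sub _ (f q) _).trans (by gcongr; exact hf _ (hxQ n) _ hqQ)
    have hSx : ‖S (P (x n - lam n • A (x n))) - q‖ ≤ ‖x n - q‖ := by
      conv_lhs => rw [← hSq]
      exact (hS _ (hPmem _) q hqQ).trans <| norm_proj_gradient_step_sub_le hPmem hP
        (hA _ (hxQ n) q hqQ) hqQ hVI (hlam n).1 (hlam n).2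
    rw [hxrec]
    exact (norm_convexComb_sub_le (hα' n).1 (hα' n).2 _ _ _).trans <|
      add_le_add (mul_le_mul_of_nonneg_left hfx (hα' n).1)
        (mul_le_mul_of_nonneg_left hSx (by linarith [(hα' n).2]))
  obtain ⟨q, hq⟩ := hΩne
  refine ⟨hdist, ‖q‖ + max ‖x 0 - q‖ ((1 / (1 - ρ)) * ‖f q - q‖), fun n => ?_⟩
  linarith [norm_le_norm_add_norm_sub' (x n) q, hdist q hq n]

/-- For arbitrary `{α_n} ⊆ (0,1]` and `{λ_n} ⊆ [0,2ν]`, the iterates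
`x_{n+1} = α_n f(x_n) + (1 - α_n) S(P_Q(x_n - λ_n A x_n))` satisfy, for every `q ∈ Ω`,
`‖x_n - q‖ ≤ max{‖x_0 - q‖, ‖f(q) - q‖/(1 - ρ)}`; in particular `{x_n}` is bounded. -/
theorem stmt_14 {H : Type*} [NormedAddCommGroup H] [InnerProductSpace ℝ H] [CompleteSpace H]
    (Q : Set H) (hQne : Q.Nonempty) (hQclosed : IsClosed Q) (hQconvex : Convex ℝ Q)
    (ν : ℝ) (hν : 0 < ν)
    (A : H → H) (hA : ∀ x ∈ Q, ∀ y ∈ Q, ν * ‖A x - A y‖ ^ 2 ≤ ⟪A x - A y, x - y⟫)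
    (P : H → H) (hPmem : ∀ x, P x ∈ Q)
    (hP : ∀ (x : H), ∀ y ∈ Q, ⟪x - P x, y - P x⟫ ≤ 0)
    (S : H → H) (hSmem : ∀ x ∈ Q, S x ∈ Q)
    (hS : ∀ x ∈ Q, ∀ y ∈ Q, ‖S x - S y‖ ≤ ‖x - y‖)
    (ρ : ℝ) (hρ : ρ ∈ Set.Ico (0 : ℝ) 1)
    (f : H → H) (hfmem : ∀ x ∈ Q, f x ∈ Q)
    (hf : ∀ x ∈ Q, ∀ y ∈ Q, ‖f x - f y‖ ≤ ρ * ‖x - y‖)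
    (Ω : Set H)
    (hΩ : Ω = {x : H | x ∈ Q ∧ S x = x} ∩ {q : H | q ∈ Q ∧ ∀ x ∈ Q, 0 ≤ ⟪A q, x - q⟫})
    (hΩne : Ω.Nonempty)
    (α lam : ℕ → ℝ)
    (hα : ∀ n, α n ∈ Set.Ioc (0 : ℝ) 1) (hlam : ∀ n, lam n ∈ Set.Icc (0 : ℝ) (2 * ν))
    (x : ℕ → H) (hx0 : x 0 ∈ Q)
    (hxrec : ∀ n, x (n + 1) = α n • f (x n) + (1 - α n) • S (P (x n - lam n • A (x n)))) :
    (∀ q ∈ Ω, ∀ n : ℕ, ‖x n - q‖ ≤ max ‖x 0 - q‖ ((1 / (1 - ρ)) * ‖f q - q‖)) ∧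
      ∃ M : ℝ, ∀ n : ℕ, ‖x n‖ ≤ M :=
  stmt_14_general Q hQconvex ν A hA P hPmem hP S hSmem hS ρ hρ f hfmem hf Ω hΩ hΩne α lam hα hlam x
    hx0 hxrec
end
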